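/- arXiv:math/9901054 — 6 statements merged into one kernel-verified Lean document; each statement's English description precedes it below -/
import Mathlib

section
/- The matrices M₀ = [[1,0],[2,1]] and M₁ = [[1,-2],[0,1]] generate the principal congruence subgroup Γ(2) of SL(2,ℤ) up to sign (i.e., together with -I they generate the preimage of the level-2 principal congruence subgroup). -/
open Matrix

/-- `M₀ = [[1,0],[2,1]]` as an element of `SL(2,ℤ)`. -/
noncomputable def M₀ : Matrix.SpecialLinearGroup (Fin 2) ℤ :=
  ⟨!![1, 0; 2, 1], by norm_num [Matrix.det_fin_two_of]⟩

/-- `M₁ = [[1,-2],[0,1]]` as an element of `SL(2,ℤ)`. -/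
noncomputable def M₁ : Matrix.SpecialLinearGroup (Fin 2) ℤ :=
  ⟨!![1, -2; 0, 1], by norm_num [Matrix.det_fin_two_of]⟩

/-- lower triangular powers -/
noncomputable def Bm (m : ℤ) : Matrix.SpecialLinearGroup (Fin 2) ℤ :=
  ⟨!![1, 0; 2*m, 1], by norm_num [Matrix.det_fin_two_of]⟩

/-- upper triangular powers -/
noncomputable def Tm (k : ℤ) : Matrix.SpecialLinearGroup (Fin 2) ℤ :=
  ⟨!![1, -2*k; 0, 1], by norm_num [Matrix.det_fin_two_of]⟩

lemma Tm_mul (k : ℤ) : Tm (k + 1) = Tm k * M₁ := by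
  apply Subtype.ext
  show (_ : Matrix (Fin 2) (Fin 2) ℤ) = _
  rw [Matrix.SpecialLinearGroup.coe_mul]
  show _ = (!![1, -2*k; 0, 1] : Matrix (Fin 2) (Fin 2) ℤ) * !![1, -2; 0, 1]
  rw [Matrix.mul_fin_two]
  norm_num [Tm]
  ring_nf

lemma Bm_mul (m : ℤ) : Bm (m + 1) = Bm m * M₀ := by
  apply Subtype.ext
  show (_ : Matrix (Fin 2) (Fin 2) ℤ) = _
  rw [Matrix.SpecialLinearGroup.coe_mul]
  show _ = (!![1, 0; 2*m, 1] : Matrix (Fin 2) (Fin 2) ℤ) * !![1, 0; 2, 1]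
  rw [Matrix.mul_fin_two]
  norm_num [Bm]
  ring_nf

lemma Tm_zero : Tm 0 = 1 := by
  apply Subtype.ext
  show (!![1, -2*(0:ℤ); 0, 1] : Matrix (Fin 2) (Fin 2) ℤ) = 1
  rw [Matrix.one_fin_two]; norm_num

lemma Bm_zero : Bm 0 = 1 := by
  apply Subtype.ext
  show (!![1, 0; 2*(0:ℤ), 1] : Matrix (Fin 2) (Fin 2) ℤ) = 1
  rw [Matrix.one_fin_two]; norm_num

lemma Tm_mem (k : ℤ) :
    Tm k ∈ Subgroup.closure ({M₀, M₁, -1} : Set (Matrix.SpecialLinearGroup (Fin 2) ℤ)) := by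
  have hM₁ : M₁ ∈ Subgroup.closure ({M₀, M₁, -1} : Set (Matrix.SpecialLinearGroup (Fin 2) ℤ)) :=
    Subgroup.subset_closure (by simp)
  induction k using Int.induction_on with
  | zero => rw [Tm_zero]; exact one_mem _
  | succ k ih => rw [Tm_mul]; exact mul_mem ih hM₁
  | pred k ih =>
    have h : Tm (-(k:ℤ) - 1) = Tm (-(k:ℤ)) * M₁⁻¹ := by
      rw [eq_mul_inv_iff_mul_eq, ← Tm_mul]; norm_num
    rw [h]; exact mul_mem ih (inv_mem hM₁)

lemma Bm_mem (m : ℤ) :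
    Bm m ∈ Subgroup.closure ({M₀, M₁, -1} : Set (Matrix.SpecialLinearGroup (Fin 2) ℤ)) := by
  have hM₀ : M₀ ∈ Subgroup.closure ({M₀, M₁, -1} : Set (Matrix.SpecialLinearGroup (Fin 2) ℤ)) :=
    Subgroup.subset_closure (by simp)
  induction m using Int.induction_on with
  | zero => rw [Bm_zero]; exact one_mem _
  | succ k ih => rw [Bm_mul]; exact mul_mem ih hM₀
  | pred k ih =>
    have h : Bm (-(k:ℤ) - 1) = Bm (-(k:ℤ)) * M₀⁻¹ := by
      rw [eq_mul_inv_iff_mul_eq, ← Bm_mul]; norm_num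
    rw [h]; exact mul_mem ih (inv_mem hM₀)

lemma reduce_pos (a c : ℤ) (hc : 0 < c) (hpar : a % 2 ≠ c % 2) :
    ∃ k : ℤ, (a - 2*k*c).natAbs < c.natAbs := by
  have h2c : (0:ℤ) < 2*c := by omega
  have hmod : 2*c * (a / (2*c)) + a % (2*c) = a := Int.mul_ediv_add_emod a (2*c)
  have h0 : 0 ≤ a % (2*c) := Int.emod_nonneg a (by omega)
  have h1 : a % (2*c) < 2*c := Int.emod_lt_of_pos a h2c
  obtain ⟨Q, hQ⟩ : ∃ Q : ℤ, 2*Q + a % (2*c) = a := ⟨c * (a / (2*c)), by linear_combination hmod⟩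
  by_cases hlt : a % (2*c) < c
  · refine ⟨a / (2*c), ?_⟩
    have e : a - 2*(a / (2*c))*c = a % (2*c) := by linear_combination -hmod
    rw [e]; omega
  · refine ⟨a / (2*c) + 1, ?_⟩
    have e : a - 2*(a / (2*c) + 1)*c = a % (2*c) - 2*c := by linear_combination -hmod
    rw [e]; omega

lemma reduce (a c : ℤ) (hc : c ≠ 0) (hpar : a % 2 ≠ c % 2) :
    ∃ k : ℤ, (a - 2*k*c).natAbs < c.natAbs := by
  rcases hc.lt_or_gt with h | h
  · obtain ⟨k, hk⟩ := reduce_pos a (-c) (by omega) (by omega)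
    refine ⟨-k, ?_⟩
    have e : a - 2*(-k)*c = a - 2*k*(-c) := by ring
    rw [e]
    simpa using hk
  · exact reduce_pos a c h hpar

/-- The matrices `M₀`, `M₁` together with `-I` generate the principal congruence
subgroup `Γ(2)` of `SL(2,ℤ)`, i.e. the kernel of reduction mod 2. -/
theorem picard_monodromy_generates_Gamma2 :
    Subgroup.closure ({M₀, M₁, -1} : Set (Matrix.SpecialLinearGroup (Fin 2) ℤ)) =
      (Matrix.SpecialLinearGroup.map (n := Fin 2) (Int.castRingHom (ZMod 2))).ker := by
  set H := Subgroup.closure ({M₀, M₁, -1} : Set (Matrix.SpecialLinearGroup (Fin 2) ℤ)) with hH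
  set K := (Matrix.SpecialLinearGroup.map (n := Fin 2) (Int.castRingHom (ZMod 2))).ker with hK
  have key : ∀ x : Matrix.SpecialLinearGroup (Fin 2) ℤ,
      ((x : Matrix (Fin 2) (Fin 2) ℤ)).map (Int.castRingHom (ZMod 2)) = 1 → x ∈ K := by
    intro x hx
    rw [hK, MonoidHom.mem_ker]
    apply Subtype.ext
    rw [Matrix.SpecialLinearGroup.map_apply_coe, RingHom.mapMatrix_apply, hx]
    rfl
  have hHK : H ≤ K := by
    rw [hH, Subgroup.closure_le]
    rintro x hx
    simp only [Set.mem_insert_iff, Set.mem_singleton_iff] at hx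
    have hneg : ((-1 : Matrix.SpecialLinearGroup (Fin 2) ℤ) : Matrix (Fin 2) (Fin 2) ℤ) =
        -(1 : Matrix (Fin 2) (Fin 2) ℤ) := rfl
    rcases hx with rfl | rfl | rfl <;>
      refine key _ ?_ <;>
      · ext i j
        fin_cases i <;> fin_cases j <;>
          simp [M₀, M₁, hneg, Matrix.map_apply, Matrix.one_fin_two] <;> decide
  -- kernel membership gives parity facts
  have parity : ∀ g : Matrix.SpecialLinearGroup (Fin 2) ℤ, g ∈ K →
      ((g : Matrix (Fin 2) (Fin 2) ℤ) 0 0) % 2 = 1 ∧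
      ((g : Matrix (Fin 2) (Fin 2) ℤ) 0 1) % 2 = 0 ∧
      ((g : Matrix (Fin 2) (Fin 2) ℤ) 1 0) % 2 = 0 ∧
      ((g : Matrix (Fin 2) (Fin 2) ℤ) 1 1) % 2 = 1 := by
    intro g hg
    rw [hK, MonoidHom.mem_ker] at hg
    have hg2 : ((g : Matrix (Fin 2) (Fin 2) ℤ)).map (Int.castRingHom (ZMod 2)) =
        (1 : Matrix (Fin 2) (Fin 2) (ZMod 2)) := by
      have := congrArg Subtype.val hg
      rwa [Matrix.SpecialLinearGroup.map_apply_coe, RingHom.mapMatrix_apply] at this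
    have e : ∀ i j : Fin 2,
        (((g : Matrix (Fin 2) (Fin 2) ℤ) i j : ℤ) : ZMod 2) = (1 : Matrix (Fin 2) (Fin 2) (ZMod 2)) i j := by
      intro i j
      have := congrFun (congrFun hg2 i) j
      simpa [Matrix.map_apply] using this
    have h00 := e 0 0
    have h01 := e 0 1
    have h10 := e 1 0
    have h11 := e 1 1
    rw [Matrix.one_apply_eq] at h00 h11
    rw [Matrix.one_apply_ne (by decide)] at h01
    rw [Matrix.one_apply_ne (by decide)] at h10
    have d00 : (2:ℤ) ∣ ((g : Matrix (Fin 2) (Fin 2) ℤ) 0 0 - 1) := by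
      have := (ZMod.intCast_zmod_eq_zero_iff_dvd ((g : Matrix (Fin 2) (Fin 2) ℤ) 0 0 - 1) 2).mp
        (by push_cast; rw [h00]; ring)
      exact_mod_cast this
    have d11 : (2:ℤ) ∣ ((g : Matrix (Fin 2) (Fin 2) ℤ) 1 1 - 1) := by
      have := (ZMod.intCast_zmod_eq_zero_iff_dvd ((g : Matrix (Fin 2) (Fin 2) ℤ) 1 1 - 1) 2).mp
        (by push_cast; rw [h11]; ring)
      exact_mod_cast this
    have d01 : (2:ℤ) ∣ ((g : Matrix (Fin 2) (Fin 2) ℤ) 0 1) := by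
      have := (ZMod.intCast_zmod_eq_zero_iff_dvd ((g : Matrix (Fin 2) (Fin 2) ℤ) 0 1) 2).mp h01
      exact_mod_cast this
    have d10 : (2:ℤ) ∣ ((g : Matrix (Fin 2) (Fin 2) ℤ) 1 0) := by
      have := (ZMod.intCast_zmod_eq_zero_iff_dvd ((g : Matrix (Fin 2) (Fin 2) ℤ) 1 0) 2).mp h10
      exact_mod_cast this
    omega
  have main : ∀ n : ℕ, ∀ g : Matrix.SpecialLinearGroup (Fin 2) ℤ, g ∈ K →
      ((g : Matrix (Fin 2) (Fin 2) ℤ) 1 0).natAbs = n → g ∈ H := by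
    intro n
    induction n using Nat.strong_induction_on with
    | _ n IH =>
      intro g hg hn
      obtain ⟨ha, hb, hc, hd⟩ := parity g hg
      have hdet : ((g : Matrix (Fin 2) (Fin 2) ℤ)).det = 1 := g.2
      rw [Matrix.det_fin_two] at hdet
      by_cases hc0 : (g : Matrix (Fin 2) (Fin 2) ℤ) 1 0 = 0
      · -- c = 0: g = ± Tm k
        rw [hc0, mul_zero, sub_zero] at hdet
        rcases Int.mul_eq_one_iff_eq_one_or_neg_one.mp hdet with ⟨h1, h2⟩ | ⟨h1, h2⟩
        · obtain ⟨k, hk⟩ : ∃ k : ℤ, (g : Matrix (Fin 2) (Fin 2) ℤ) 0 1 = -2*k :=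
            ⟨-((g : Matrix (Fin 2) (Fin 2) ℤ) 0 1 / 2), by omega⟩
          have : g = Tm k := by
            apply Subtype.ext
            show (g : Matrix (Fin 2) (Fin 2) ℤ) = !![1, -2*k; 0, 1]
            rw [Matrix.eta_fin_two (g : Matrix (Fin 2) (Fin 2) ℤ), h1, h2, hc0, hk]
          rw [this]; exact Tm_mem k
        · obtain ⟨k, hk⟩ : ∃ k : ℤ, (g : Matrix (Fin 2) (Fin 2) ℤ) 0 1 = 2*k :=
            ⟨((g : Matrix (Fin 2) (Fin 2) ℤ) 0 1 / 2), by omega⟩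
          have hneg1 : ((-1 : Matrix.SpecialLinearGroup (Fin 2) ℤ) : Matrix (Fin 2) (Fin 2) ℤ) =
              !![-1, 0; 0, -1] := by
            have : ((-1 : Matrix.SpecialLinearGroup (Fin 2) ℤ) : Matrix (Fin 2) (Fin 2) ℤ) =
                -(1 : Matrix (Fin 2) (Fin 2) ℤ) := rfl
            rw [this, Matrix.one_fin_two]
            ext i j
            fin_cases i <;> fin_cases j <;> simp
          have : g = (-1) * Tm k := by
            apply Subtype.ext
            show (g : Matrix (Fin 2) (Fin 2) ℤ) = _
            rw [Matrix.SpecialLinearGroup.coe_mul, hneg1]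
            show _ = (!![-1, 0; 0, -1] : Matrix (Fin 2) (Fin 2) ℤ) * !![1, -2*k; 0, 1]
            rw [Matrix.mul_fin_two,
              Matrix.eta_fin_two (g : Matrix (Fin 2) (Fin 2) ℤ), h1, h2, hc0, hk]
            norm_num
          rw [this]
          have hneg : (-1 : Matrix.SpecialLinearGroup (Fin 2) ℤ) ∈ H :=
            Subgroup.subset_closure (by simp)
          exact mul_mem hneg (Tm_mem k)
      · -- c ≠ 0
        obtain ⟨k, hk⟩ := reduce ((g : Matrix (Fin 2) (Fin 2) ℤ) 0 0)
          ((g : Matrix (Fin 2) (Fin 2) ℤ) 1 0) hc0 (by omega)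
        set a' := (g : Matrix (Fin 2) (Fin 2) ℤ) 0 0 - 2*k*((g : Matrix (Fin 2) (Fin 2) ℤ) 1 0)
          with ha'
        obtain ⟨P, hP⟩ : ∃ P : ℤ, a' = (g : Matrix (Fin 2) (Fin 2) ℤ) 0 0 - 2*P :=
          ⟨k*((g : Matrix (Fin 2) (Fin 2) ℤ) 1 0), by rw [ha']; ring⟩
        have ha'odd : a' % 2 = 1 := by omega
        have ha'0 : a' ≠ 0 := by omega
        obtain ⟨m, hm⟩ := reduce ((g : Matrix (Fin 2) (Fin 2) ℤ) 1 0) a' ha'0 (by omega)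
        set h := Bm (-m) * (Tm k * g) with hh
        have hcoe : (h : Matrix (Fin 2) (Fin 2) ℤ) =
            (!![1, 0; 2*(-m), 1] : Matrix (Fin 2) (Fin 2) ℤ) *
              ((!![1, -2*k; 0, 1] : Matrix (Fin 2) (Fin 2) ℤ) * (g : Matrix (Fin 2) (Fin 2) ℤ)) := by
          rw [hh]
          rw [Matrix.SpecialLinearGroup.coe_mul, Matrix.SpecialLinearGroup.coe_mul]
          rfl
        have hh10 : (h : Matrix (Fin 2) (Fin 2) ℤ) 1 0 =
            (g : Matrix (Fin 2) (Fin 2) ℤ) 1 0 - 2*m*a' := by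
          rw [hcoe]
          simp only [Matrix.mul_apply, Fin.sum_univ_two, Matrix.cons_val', Matrix.cons_val_zero,
            Matrix.cons_val_one, Matrix.head_cons, Matrix.head_fin_const, Matrix.empty_val',
            Matrix.cons_val_fin_one, Matrix.of_apply]
          ring
        have hhK : h ∈ K := mul_mem (hHK (Bm_mem (-m))) (mul_mem (hHK (Tm_mem k)) hg)
        have hlt : ((h : Matrix (Fin 2) (Fin 2) ℤ) 1 0).natAbs < n := by
          rw [hh10]; omega
        have hmem : h ∈ H := IH _ hlt h hhK rfl
        have hg' : g = (Tm k)⁻¹ * ((Bm (-m))⁻¹ * h) := by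
          rw [hh]; group
        rw [hg']
        exact mul_mem (inv_mem (Tm_mem k)) (mul_mem (inv_mem (Bm_mem (-m))) hmem)
  apply le_antisymm hHK
  intro g hg
  exact main _ g hg rfl
end

section
/- For any pair of coprime odd integers m₁, m₂, there exists a matrix [[a,b],[c,d]] in Γ(2) with a+b = m₁ and c+d = m₂. -/
/-!
A Bézout relation `u * m₁ + v * m₂ = 1` gives the matrix `[[m₁ + v, -v], [m₂ - u, u]]`, of
determinant `u * m₁ + v * m₂ = 1` and row sums `m₁, m₂`. It lies in `Γ(2)` as soon as `u` is odd
and `v` even; since `m₁, m₂` are odd, `u + v` is odd, and if `u` is the even one the shifted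
relation `(u + m₂) * m₁ + (v - m₁) * m₂ = 1` has the right parities.
-/

lemma Int.odd_add_of_mul_add_mul_eq_one {m₁ m₂ u v : ℤ} (h₁ : Odd m₁) (h₂ : Odd m₂)
    (huv : u * m₁ + v * m₂ = 1) : Odd (u + v) := by
  have h : Odd (u * m₁ + v * m₂) := huv ▸ odd_one
  simpa [← Int.not_even_iff_odd, Int.even_add, Int.even_mul, Int.not_even_iff_odd.mpr h₁,
    Int.not_even_iff_odd.mpr h₂] using h

lemma IsCoprime.exists_odd_even_of_odd {m₁ m₂ : ℤ} (h₁ : Odd m₁) (h₂ : Odd m₂)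
    (hcop : IsCoprime m₁ m₂) : ∃ u v : ℤ, Odd u ∧ Even v ∧ u * m₁ + v * m₂ = 1 := by
  obtain ⟨u, v, huv⟩ := hcop
  have hsum := Int.odd_add_of_mul_add_mul_eq_one h₁ h₂ huv
  rcases Int.even_or_odd u with hu | hu
  · have hv : Odd v := by simpa using hsum.sub_even hu
    exact ⟨u + m₂, v - m₁, hu.add_odd h₂, hv.sub_odd h₁, by linear_combination huv⟩
  · have hv : Even v := by simpa using hsum.sub_odd hu
    exact ⟨u, v, hu, hv, huv⟩

/-- For any pair of coprime odd integers `m₁, m₂` there is a matrix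
`[[a,b],[c,d]] ∈ Γ(2)` with `a + b = m₁` and `c + d = m₂`. -/
theorem Gamma2_realizes_odd_coprime_pair (m₁ m₂ : ℤ)
    (h₁ : Odd m₁) (h₂ : Odd m₂) (hcop : IsCoprime m₁ m₂) :
    ∃ a b c d : ℤ, a * d - b * c = 1 ∧ Odd a ∧ Odd d ∧ Even b ∧ Even c ∧
      a + b = m₁ ∧ c + d = m₂ := by
  obtain ⟨u, v, hu, hv, huv⟩ := hcop.exists_odd_even_of_odd h₁ h₂
  exact ⟨m₁ + v, -v, m₂ - u, u, by linear_combination huv, h₁.add_even hv, hu, hv.neg,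
    h₂.sub_odd hu, by ring, by ring⟩
end

section
/- For any coprime integers m₁, m₂ with m₁ even and m₂ odd, there exists a matrix [[a,b],[c,d]] in Γ(2) with b = m₁ and d = m₂. -/
lemma Int.odd_of_isCoprime_of_even {m n : ℤ} (hm : Even m) (h : IsCoprime m n) : Odd n :=
  Int.isCoprime_two_left.mp (h.of_isCoprime_of_dvd_left hm.two_dvd)

theorem Gamma2_realizes_even_odd_coprime_pair_general (m₁ m₂ : ℤ)
    (h₁ : Even m₁) (hcop : IsCoprime m₁ m₂) :
    ∃ a b c d : ℤ, a * d - b * c = 1 ∧ Odd a ∧ Odd d ∧ Even b ∧ Even c ∧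
      b = m₁ ∧ d = m₂ := by
  have h₂ : Odd m₂ := Int.odd_of_isCoprime_of_even h₁ hcop
  obtain ⟨u, v, huv⟩ := hcop
  have hv : Odd v := Int.odd_of_isCoprime_of_even h₁ ⟨u, m₂, by linear_combination huv⟩
  -- Bézout makes `[[v, m₁], [-u, m₂]]` unimodular; adding `u` times the second column to the
  -- first keeps the determinant and makes `c = u * (m₂ - 1)` even.
  exact ⟨v + u * m₁, m₁, u * (m₂ - 1), m₂, by linear_combination huv,
    hv.add_even (h₁.mul_left u), h₂, h₁, (h₂.sub_odd odd_one).mul_left u, rfl, rfl⟩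

/-- For any coprime integers `m₁, m₂` with `m₁` even and `m₂` odd, there is a matrix
`[[a,b],[c,d]] ∈ Γ(2)` with `b = m₁` and `d = m₂`. -/
theorem Gamma2_realizes_even_odd_coprime_pair (m₁ m₂ : ℤ)
    (h₁ : Even m₁) (h₂ : Odd m₂) (hcop : IsCoprime m₁ m₂) :
    ∃ a b c d : ℤ, a * d - b * c = 1 ∧ Odd a ∧ Odd d ∧ Even b ∧ Even c ∧
      b = m₁ ∧ d = m₂ :=
  Gamma2_realizes_even_odd_coprime_pair_general m₁ m₂ h₁ hcop
end

section
/- For every a ∈ ℂ with a ≠ 0, the rational function y(x) = a·x / (1 − (1−a)·x) solves the Painlevé VI equation PVIμ with μ = 1, i.e. y'' = (1/2)(1/y + 1/(y−1) + 1/(y−x))·(y')² − (1/x + 1/(x−1) + 1/(y−x))·y' + (1/2)·y(y−1)(y−x)/(x²(x−1)²)·[(2μ−1)² + x(x−1)/(y−x)²], at every point x where y, y−1, y−x, x, x−1 are nonzero. -/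
set_option maxHeartbeats 1600000 in
/-- For every `a ≠ 0`, the rational function `y(x) = a·x / (1 − (1−a)·x)` solves the
Painlevé VI equation PVIμ with `μ = 1` at every point `x` where `y`, `y−1`, `y−x`,
`x`, `x−1` are nonzero. -/
theorem rational_solution_PVI_mu_one (a : ℂ) (ha : a ≠ 0)
    (y : ℂ → ℂ) (hy : ∀ x, y x = a * x / (1 - (1 - a) * x))
    (x : ℂ) (hx0 : x ≠ 0) (hx1 : x - 1 ≠ 0)
    (hy0 : y x ≠ 0) (hy1 : y x - 1 ≠ 0) (hyx : y x - x ≠ 0) :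
    deriv (deriv y) x =
      (1 / 2) * (1 / y x + 1 / (y x - 1) + 1 / (y x - x)) * (deriv y x) ^ 2
      - (1 / x + 1 / (x - 1) + 1 / (y x - x)) * deriv y x
      + (1 / 2) * (y x * (y x - 1) * (y x - x)) / (x ^ 2 * (x - 1) ^ 2) *
          ((2 * (1 : ℂ) - 1) ^ 2 + x * (x - 1) / (y x - x) ^ 2) := by
  have hyf : y = fun t => a * t / (1 - (1 - a) * t) := funext hy
  subst hyf
  have hd : 1 - (1 - a) * x ≠ 0 := by
    intro h
    apply hy0
    simp [h]
  -- denominator nonzero on an open neighborhood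
  have hden : ∀ t : ℂ, 1 - (1 - a) * t ≠ 0 →
      HasDerivAt (fun t => a * t / (1 - (1 - a) * t)) (a / (1 - (1 - a) * t) ^ 2) t := by
    intro t ht
    have h1 : HasDerivAt (fun s : ℂ => a * s) a t := by
      simpa using (hasDerivAt_id t).const_mul a
    have h2 : HasDerivAt (fun s : ℂ => 1 - (1 - a) * s) (-(1 - a)) t := by
      simpa using ((hasDerivAt_id t).const_mul (1 - a)).const_sub 1
    have := h1.div h2 ht
    exact this.congr_deriv (by congr 1; ring)
  have hopen : IsOpen {t : ℂ | 1 - (1 - a) * t ≠ 0} := by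
    have : Continuous fun t : ℂ => 1 - (1 - a) * t := by continuity
    exact isOpen_compl_singleton.preimage this
  have hmem : {t : ℂ | 1 - (1 - a) * t ≠ 0} ∈ nhds x := hopen.mem_nhds hd
  have hderiv_eq : deriv (fun t => a * t / (1 - (1 - a) * t)) =ᶠ[nhds x]
      fun t => a / (1 - (1 - a) * t) ^ 2 := by
    filter_upwards [hmem] with t ht
    exact (hden t ht).deriv
  have hd1 : deriv (fun t => a * t / (1 - (1 - a) * t)) x = a / (1 - (1 - a) * x) ^ 2 :=
    (hden x hd).deriv
  have hg : HasDerivAt (fun t : ℂ => a / (1 - (1 - a) * t) ^ 2)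
      (2 * a * (1 - a) / (1 - (1 - a) * x) ^ 3) x := by
    have h2 : HasDerivAt (fun s : ℂ => 1 - (1 - a) * s) (-(1 - a)) x := by
      simpa using ((hasDerivAt_id x).const_mul (1 - a)).const_sub 1
    have h3 : HasDerivAt (fun s : ℂ => (1 - (1 - a) * s) ^ 2)
        (2 * (1 - (1 - a) * x) * (-(1 - a))) x := by
      exact (h2.pow 2).congr_deriv (by simp only [Nat.reduceSub, pow_one, Nat.cast_ofNat])
    have hd2 : (1 - (1 - a) * x) ^ 2 ≠ 0 := pow_ne_zero _ hd
    have := (hasDerivAt_const x a).div h3 hd2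
    exact this.congr_deriv (by field_simp; ring)
  have hd2 : deriv (deriv (fun t => a * t / (1 - (1 - a) * t))) x
      = 2 * a * (1 - a) / (1 - (1 - a) * x) ^ 3 := by
    rw [Filter.EventuallyEq.deriv_eq hderiv_eq]
    exact hg.deriv
  rw [hd2, hd1]
  simp only [hy] at hy0 hy1 hyx ⊢
  have hb : (1 : ℂ) - a ≠ 0 := by
    intro h
    apply hyx
    rw [h]
    simp only [zero_mul, sub_zero, div_one]
    linear_combination -x * h
  have e1 : a * x / (1 - (1 - a) * x) - 1 = (x - 1) / (1 - (1 - a) * x) := by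
    rw [eq_div_iff hd, sub_mul, div_mul_cancel₀ _ hd]; ring
  have e2 : a * x / (1 - (1 - a) * x) - x = (1 - a) * x * (x - 1) / (1 - (1 - a) * x) := by
    rw [eq_div_iff hd, sub_mul, div_mul_cancel₀ _ hd]; ring
  rw [e1, e2]
  have hxx : (1 - a) * x * (x - 1) ≠ 0 := mul_ne_zero (mul_ne_zero hb hx0) hx1
  clear hy hy0 hy1 hyx hden hopen hmem hderiv_eq hd1 hg hd2 e1 e2 hxx
  simp only [one_div_div, div_pow, div_div, div_mul_div_comm, mul_one]
  field_simp
  ring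
end

section
/- Consider the action on triples of rationals in [0,1] given by β₁ : (r₁,r₂,r₃) ↦ (|1−r₁|, |r₁−r₂|, r₂) and β₂ : (r₁,r₂,r₃) ↦ (r₃, |1−r₂|, |r₃−r₂|). If r₁, r₂, r₃ all lie in (1/n)·ℤ for a fixed positive integer n, then every element of the orbit of (r₁,r₂,r₃) under the monoid generated by β₁ and β₂ also lies in ((1/n)·ℤ ∩ [0,1])³; consequently the orbit is finite. -/
/-- The braid generator `β₁` acting on flat triangles. -/
def braidBeta1 (r : ℚ × ℚ × ℚ) : ℚ × ℚ × ℚ :=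
  (|1 - r.1|, |r.1 - r.2.1|, r.2.1)

/-- The braid generator `β₂` acting on flat triangles. -/
def braidBeta2 (r : ℚ × ℚ × ℚ) : ℚ × ℚ × ℚ :=
  (r.2.2, |1 - r.2.1|, |r.2.2 - r.2.1|)

/-- Application of a word in the generators `β₁`, `β₂` (encoded as a list of booleans). -/
def braidWord (w : List Bool) (r : ℚ × ℚ × ℚ) : ℚ × ℚ × ℚ :=
  w.foldl (fun t b => if b then braidBeta1 t else braidBeta2 t) r

/-- Rationals in `[0,1]` with denominator dividing `n`. -/
def denomSet (n : ℕ) : Set ℚ :=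
  {s : ℚ | 0 ≤ s ∧ s ≤ 1 ∧ ∃ k : ℤ, s = (k : ℚ) / n}

lemma abs_sub_mem {n : ℕ} {a b : ℚ} (ha : a ∈ denomSet n) (hb : b ∈ denomSet n) :
    |a - b| ∈ denomSet n := by
  obtain ⟨ha0, ha1, ka, hka⟩ := ha
  obtain ⟨hb0, hb1, kb, hkb⟩ := hb
  refine ⟨abs_nonneg _, ?_, |ka - kb|, ?_⟩
  · rw [abs_sub_le_iff]; constructor <;> linarith
  · rw [hka, hkb, div_sub_div_same, Int.cast_abs, abs_div,
      abs_of_nonneg (by positivity : (0:ℚ) ≤ (n:ℚ))]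
    push_cast
    ring_nf

lemma one_sub_mem {n : ℕ} (hn : 0 < n) {a : ℚ} (ha : a ∈ denomSet n) :
    |1 - a| ∈ denomSet n := by
  have h1 : (1 : ℚ) ∈ denomSet n := ⟨zero_le_one, le_refl 1, n, by field_simp; exact (Int.cast_natCast n).symm⟩
  exact abs_sub_mem h1 ha

lemma denomSet_finite (n : ℕ) (hn : 0 < n) : (denomSet n).Finite := by
  have : denomSet n ⊆ (fun k : ℤ => (k : ℚ) / n) '' (Set.Icc 0 n) := by
    rintro s ⟨h0, h1, k, rfl⟩
    have hn' : (0:ℚ) < n := by positivity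
    refine ⟨k, ⟨?_, ?_⟩, rfl⟩
    · have hk : (0:ℚ) ≤ (k:ℚ) := by
        have := mul_nonneg h0 hn'.le
        rwa [div_mul_cancel₀ _ hn'.ne'] at this
      exact_mod_cast hk
    · have : (k:ℚ) ≤ n := by
        have := (div_le_one hn').mp h1
        linarith
      exact_mod_cast this
  exact ((Set.finite_Icc (0:ℤ) n).image _).subset this

/-- If the angles `r₁, r₂, r₃ ∈ [0,1]` all have denominator dividing `n`, then the whole
orbit of `(r₁,r₂,r₃)` under the monoid generated by `β₁, β₂` lies in
`((1/n)·ℤ ∩ [0,1])³`; consequently the orbit is finite. -/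
theorem braid_orbit_finite (n : ℕ) (hn : 0 < n) (r : ℚ × ℚ × ℚ)
    (h1 : r.1 ∈ denomSet n) (h2 : r.2.1 ∈ denomSet n) (h3 : r.2.2 ∈ denomSet n) :
    (∀ w : List Bool,
      (braidWord w r).1 ∈ denomSet n ∧ (braidWord w r).2.1 ∈ denomSet n ∧
        (braidWord w r).2.2 ∈ denomSet n) ∧
    Set.Finite {t : ℚ × ℚ × ℚ | ∃ w : List Bool, t = braidWord w r} := by
  have key : ∀ w : List Bool, ∀ s : ℚ × ℚ × ℚ,
      s.1 ∈ denomSet n → s.2.1 ∈ denomSet n → s.2.2 ∈ denomSet n →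
      (braidWord w s).1 ∈ denomSet n ∧ (braidWord w s).2.1 ∈ denomSet n ∧
        (braidWord w s).2.2 ∈ denomSet n := by
    intro w
    induction w with
    | nil => intro s a b c; exact ⟨a, b, c⟩
    | cons hd tl ih =>
      intro s a b c
      show (braidWord tl _).1 ∈ _ ∧ _
      cases hd <;> simp only [braidWord, List.foldl_cons, if_true, if_false] <;>
        [exact ih _ c (one_sub_mem hn b) (abs_sub_mem c b);
         exact ih _ (one_sub_mem hn a) (abs_sub_mem a b) b]
  refine ⟨fun w => key w r h1 h2 h3, ?_⟩
  have hfin := denomSet_finite n hn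
  apply Set.Finite.subset (hfin.prod (hfin.prod hfin))
  rintro t ⟨w, rfl⟩
  exact key w r h1 h2 h3
end

section
/- The function γ-independent verification: if w₁, w₂, w₃ are the three roots of the cubic w³ + (3/2)γ(τ)w² + (3/2)γ'(τ)w + (1/4)γ''(τ) = 0 and they satisfy the Halphen system w₁' = −w₁(w₂+w₃) + w₂w₃ (and cyclic permutations), then γ satisfies the Chazy equation γ''' = 6γγ'' − 9(γ')². -/
/-- If `w₁, w₂, w₃` are the roots of
`w³ + (3/2)γw² + (3/2)γ'w + (1/4)γ'' = 0` (i.e. satisfy the Vieta relations)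
and solve the Halphen system, then `γ` satisfies the Chazy equation
`γ''' = 6γγ'' − 9(γ')²`. -/
theorem halphen_implies_chazy (γ w₁ w₂ w₃ : ℂ → ℂ)
    (hγ : Differentiable ℂ γ)
    (hγ' : Differentiable ℂ (deriv γ))
    (hγ'' : Differentiable ℂ (deriv (deriv γ)))
    (hw₁ : Differentiable ℂ w₁) (hw₂ : Differentiable ℂ w₂) (hw₃ : Differentiable ℂ w₃)
    (vieta1 : ∀ τ, w₁ τ + w₂ τ + w₃ τ = -(3 / 2) * γ τ)
    (vieta2 : ∀ τ, w₁ τ * w₂ τ + w₁ τ * w₃ τ + w₂ τ * w₃ τ = (3 / 2) * deriv γ τ)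
    (vieta3 : ∀ τ, w₁ τ * w₂ τ * w₃ τ = -(1 / 4) * deriv (deriv γ) τ)
    (halphen1 : ∀ τ, deriv w₁ τ = -w₁ τ * (w₂ τ + w₃ τ) + w₂ τ * w₃ τ)
    (halphen2 : ∀ τ, deriv w₂ τ = -w₂ τ * (w₁ τ + w₃ τ) + w₁ τ * w₃ τ)
    (halphen3 : ∀ τ, deriv w₃ τ = -w₃ τ * (w₁ τ + w₂ τ) + w₁ τ * w₂ τ) :
    ∀ τ, deriv (deriv (deriv γ)) τ =
      6 * γ τ * deriv (deriv γ) τ - 9 * (deriv γ τ) ^ 2 := by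
  intro τ
  have heq : (fun t => w₁ t * w₂ t * w₃ t) = (fun t => -(1 / 4) * deriv (deriv γ) t) :=
    funext vieta3
  have hD : deriv (fun t => w₁ t * w₂ t * w₃ t) τ
      = deriv (fun t => -(1 / 4) * deriv (deriv γ) t) τ := by rw [heq]
  have hL : deriv (fun t => w₁ t * w₂ t * w₃ t) τ
      = (deriv w₁ τ * w₂ τ + w₁ τ * deriv w₂ τ) * w₃ τ
        + w₁ τ * w₂ τ * deriv w₃ τ := by
    rw [deriv_fun_mul ((hw₁ τ).fun_mul (hw₂ τ)) (hw₃ τ), deriv_fun_mul (hw₁ τ) (hw₂ τ)]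
  have hR : deriv (fun t => -(1 / 4) * deriv (deriv γ) t) τ
      = -(1 / 4) * deriv (deriv (deriv γ)) τ := by
    rw [deriv_const_mul _ (hγ'' τ)]
  rw [hL, hR, halphen1 τ, halphen2 τ, halphen3 τ] at hD
  have v1 := vieta1 τ
  have v2 := vieta2 τ
  have v3 := vieta3 τ
  linear_combination (4 : ℂ) * hD
    - 4 * (w₁ τ * w₂ τ + w₁ τ * w₃ τ + w₂ τ * w₃ τ + 3 / 2 * deriv γ τ) * v2
    + 16 * (w₁ τ * w₂ τ * w₃ τ) * v1 - 24 * γ τ * v3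
end
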